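/- Equivariance under placement rotation (special case g₁ = 0 of Proposition 2): if ψ and φ are Cₙ-equivariant and Ψ(c) = ℛₙ(ψ(c)), then for all g ∈ Cₙ, Ψ(c) ⋆ φ(T_g⁰ o) = T_g^{reg} ( Ψ(c) ⋆ φ(o) ), where T_g^{reg} = ρ_reg(g) ∘ T_g⁰ both rotates pixel positions and cyclically shifts the channels. -/

import Mathlib

open Matrix

/-- The planar rotation matrix by angle `θ`. -/
noncomputable def Rot (θ : ℝ) : Matrix (Fin 2) (Fin 2) ℝ :=
  !![Real.cos θ, -Real.sin θ; Real.sin θ, Real.cos θ]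

/-- The action `T⁰` of the group element `g^i` (where `g = Rot_{2π/n}` generates `Cₙ`
and `i : ZMod n`) on images `f : ℝ² → ℝ`, given by `(T_{g^i}⁰ f)(x) = f(g^{-i} x)`. -/
noncomputable def Tpow (n : ℕ) (i : ZMod n) (f : (Fin 2 → ℝ) → ℝ) : (Fin 2 → ℝ) → ℝ :=
  fun x => f ((Rot (-(2 * Real.pi * i.val / n))).mulVec x)

/-- Embedding of the integer lattice `ℤ²` into `ℝ²`. -/
def toR (w : Fin 2 → ℤ) : Fin 2 → ℝ := fun i => (w i : ℝ)

/-- Channelwise cross-correlation of an `n`-channel kernel `K` with an image `h`: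
`(K ⋆ h)(v)ᵢ = ∑_{w ∈ ℤ²} Kᵢ(w) h(v + w)`. -/
noncomputable def xcorrN (n : ℕ) (K : ZMod n → ((Fin 2 → ℝ) → ℝ))
    (h : (Fin 2 → ℝ) → ℝ) : (Fin 2 → ℝ) → ZMod n → ℝ :=
  fun v i => ∑' w : Fin 2 → ℤ, K i (toR w) * h (v + toR w)

/-- `Ψ(c) = ℛₙ(ψ(c))`: the `n`-channel lifted kernel, `Ψ(c)ᵢ = T_{g^i}⁰(ψ(c))`. -/
noncomputable def PsiLift (n : ℕ) (ψ : ((Fin 2 → ℝ) → ℝ) → ((Fin 2 → ℝ) → ℝ))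
    (c : (Fin 2 → ℝ) → ℝ) : ZMod n → ((Fin 2 → ℝ) → ℝ) :=
  fun i => Tpow n i (ψ c)

/-! Substituting `w ↦ σ w` in the lattice sum moves the rotation `g⁻¹` of the image `φ(o)` onto
the kernel, where it becomes the rotation by `g`. Rotating the lifted kernel `Ψ(c)ᵢ = T_{gⁱ}⁰ ψ(c)`
by `g` gives `Ψ(c)_{i-g}`, because the rotations by the angles `2π j.val / n` compose like the
elements `j` of `ZMod n`, up to multiples of `2π`. -/

lemma Rot_mul (a b : ℝ) : Rot a * Rot b = Rot (a + b) := by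
  ext i j
  fin_cases i <;> fin_cases j <;>
    simp [Rot, Matrix.mul_apply, Fin.sum_univ_two, Real.cos_add, Real.sin_add] <;> ring

lemma Rot_add_int_mul_two_pi (a : ℝ) (k : ℤ) : Rot (a + k * (2 * Real.pi)) = Rot a := by
  simp [Rot, Real.cos_add_int_mul_two_pi, Real.sin_add_int_mul_two_pi]

lemma Rot_zero : Rot 0 = 1 := by
  simp [Rot, Matrix.one_fin_two]

lemma Rot_neg_mul_self (a : ℝ) : Rot (-a) * Rot a = 1 := by
  rw [Rot_mul, neg_add_cancel, Rot_zero]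

lemma ZMod.exists_val_sub_val_eq {n : ℕ} [NeZero n] (i g : ZMod n) :
    ∃ k : ℤ, (i.val : ℤ) - g.val = (i - g).val + n * k := by
  have h : (((i.val : ℤ) - g.val - (i - g).val : ℤ) : ZMod n) = 0 := by
    push_cast
    simp [ZMod.natCast_val]
  obtain ⟨k, hk⟩ := (ZMod.intCast_zmod_eq_zero_iff_dvd _ n).mp h
  exact ⟨k, by linarith⟩

lemma Rot_neg_angle_add_angle {n : ℕ} (i g : ZMod n) :
    Rot (-(2 * Real.pi * i.val / n) + 2 * Real.pi * g.val / n)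
      = Rot (-(2 * Real.pi * (i - g).val / n)) := by
  rcases eq_or_ne n 0 with rfl | hn
  · simp -- every angle is `0`, as `x / 0 = 0`
  have : NeZero n := ⟨hn⟩
  obtain ⟨k, hk⟩ := ZMod.exists_val_sub_val_eq i g
  have hk' : (i.val : ℝ) - g.val = (i - g).val + n * k := by exact_mod_cast hk
  have hangle : -(2 * Real.pi * i.val / n) + 2 * Real.pi * g.val / n
      = -(2 * Real.pi * (i - g).val / n) + ((-k : ℤ) : ℝ) * (2 * Real.pi) := by
    have hn' : (n : ℝ) ≠ 0 := Nat.cast_ne_zero.mpr hn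
    push_cast
    field_simp
    linear_combination -hk'
  rw [hangle, Rot_add_int_mul_two_pi]

lemma Tpow_apply_Rot_mulVec {n : ℕ} (f : (Fin 2 → ℝ) → ℝ) (i g : ZMod n) (y : Fin 2 → ℝ) :
    Tpow n i f ((Rot (2 * Real.pi * g.val / n)).mulVec y) = Tpow n (i - g) f y := by
  simp only [Tpow, Matrix.mulVec_mulVec, Rot_mul, Rot_neg_angle_add_angle]

lemma xcorrN_comp_mulVec {n : ℕ} (K : ZMod n → (Fin 2 → ℝ) → ℝ) (h : (Fin 2 → ℝ) → ℝ)
    {A B : Matrix (Fin 2) (Fin 2) ℝ} (hBA : B * A = 1) (σ : (Fin 2 → ℤ) ≃ (Fin 2 → ℤ))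
    (hσ : ∀ w, toR (σ w) = A.mulVec (toR w)) (x : Fin 2 → ℝ) (i : ZMod n) :
    xcorrN n K (fun y => h (B.mulVec y)) x i
      = xcorrN n (fun j y => K j (A.mulVec y)) h (B.mulVec x) i := by
  simp only [xcorrN]
  rw [← Equiv.tsum_eq σ]
  refine tsum_congr fun w => ?_
  rw [hσ, Matrix.mulVec_add, Matrix.mulVec_mulVec, hBA, Matrix.one_mulVec]

theorem stmt6_general (n : ℕ)
    (ψ φ : ((Fin 2 → ℝ) → ℝ) → ((Fin 2 → ℝ) → ℝ))
    (hφ : ∀ (g : ZMod n) (o), φ (Tpow n g o) = Tpow n g (φ o))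
    (hlat : ∀ i : ZMod n, ∃ σ : (Fin 2 → ℤ) ≃ (Fin 2 → ℤ),
      ∀ w : Fin 2 → ℤ, toR (σ w) = (Rot (2 * Real.pi * i.val / n)).mulVec (toR w))
    (c o : (Fin 2 → ℝ) → ℝ) (g : ZMod n) :
    xcorrN n (PsiLift n ψ c) (φ (Tpow n g o))
      = fun x i => xcorrN n (PsiLift n ψ c) (φ o)
          ((Rot (-(2 * Real.pi * g.val / n))).mulVec x) (i - g) := by
  funext x i
  obtain ⟨σ, hσ⟩ := hlat g
  rw [hφ]
  unfold Tpow
  rw [xcorrN_comp_mulVec _ _ (Rot_neg_mul_self _) σ hσ]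
  simp only [xcorrN, PsiLift, Tpow_apply_Rot_mulVec]

/-- Equivariance under placement rotation (special case `g₁ = 0` of Proposition 2): if `ψ` and
`φ` are Cₙ-equivariant and `Ψ(c) = ℛₙ(ψ(c))`, then for all `g ∈ Cₙ`,
`Ψ(c) ⋆ φ(T_g⁰ o) = T_g^{reg}(Ψ(c) ⋆ φ(o))` where `T_g^{reg} = ρ_reg(g) ∘ T_g⁰` both rotates
pixel positions and cyclically shifts the channels: `(T_g^{reg} F)(x)ᵢ = F(g⁻¹x)_{i-g}`. -/
theorem stmt6 (n : ℕ) [NeZero n]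
    (ψ φ : ((Fin 2 → ℝ) → ℝ) → ((Fin 2 → ℝ) → ℝ))
    (hψ : ∀ (g : ZMod n) (c), ψ (Tpow n g c) = Tpow n g (ψ c))
    (hφ : ∀ (g : ZMod n) (o), φ (Tpow n g o) = Tpow n g (φ o))
    (hfin : ∀ (c : (Fin 2 → ℝ) → ℝ) (i : ZMod n),
      (Function.support fun w : Fin 2 → ℤ => PsiLift n ψ c i (toR w)).Finite)
    (hlat : ∀ i : ZMod n, ∃ σ : (Fin 2 → ℤ) ≃ (Fin 2 → ℤ),
      ∀ w : Fin 2 → ℤ, toR (σ w) = (Rot (2 * Real.pi * i.val / n)).mulVec (toR w))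
    (c o : (Fin 2 → ℝ) → ℝ) (g : ZMod n) :
    xcorrN n (PsiLift n ψ c) (φ (Tpow n g o))
      = fun x i => xcorrN n (PsiLift n ψ c) (φ o)
          ((Rot (-(2 * Real.pi * g.val / n))).mulVec x) (i - g) :=
  stmt6_general n ψ φ hφ hlat c o g
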